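/- arXiv:1802.08023 — 2 statements merged into one kernel-verified Lean document; each statement's English description precedes it below -/
import Mathlib

section
/- Second ex-post efficiency guarantee of the Trade Reduction mechanism for matching markets: let M be a nonempty maximum-weight matching of the matching market G with weight OPT, and define GFT_TR = Σ over buyer classes t with q_t > 0 of (the sum of the q_t − d_t largest values among all class-t buyers) minus Σ over seller classes t with q_t > 0 of (the sum of the q_t − d_t smallest costs among all class-t sellers). Then GFT_TR ≥ β · OPT, where β = min{ 1 − 1/r_{t,t'} : t, t' classes with r_{t,t'} > 0 }. -/
/-!
Every trade of a maximum-weight matching `M` has nonnegative gains, since dropping it yields a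
matching. Remove from `M` a lightest trade of each class pair `(t, t')` that trades in `M`, and call
the removed set `D`. The lightest of `r_{t,t'}` trades carries at most a `1 / r_{t,t'}` share of
their gains, so the trades of `M \ D` gain at least `β · OPT`. For a buyer class `t`, `D` holds
exactly `d_t` trades of class-`t` buyers, one for each seller class they trade with, so `M \ D`
matches `q_t - d_t` distinct class-`t` buyers, whose values add up to at most the `q_t - d_t`
largest class-`t` values; dually for sellers. Hence `GFT_TR ≥ ∑_{M \ D} (b - s) ≥ β · OPT`.
-/

open Finset

/-- A matching of the bipartite graph with buyer vertices `B`, seller vertices `S` and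
edge relation `E`: a finite set of edges (buyer–seller pairs) that are pairwise
vertex-disjoint. -/
def IsMatchingOn {B S : Type*} (E : B → S → Prop) (M : Finset (B × S)) : Prop :=
  (∀ p ∈ M, E p.1 p.2) ∧
  (∀ p ∈ M, ∀ q ∈ M, p.1 = q.1 → p = q) ∧
  (∀ p ∈ M, ∀ q ∈ M, p.2 = q.2 → p = q)

/-- The weight (gains from trade) of a matching: `∑_{(i,j) ∈ M} (b i - s j)`. -/
noncomputable def matchWeight {B S : Type*} (b : B → ℝ) (s : S → ℝ)
    (M : Finset (B × S)) : ℝ :=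
  ∑ p ∈ M, (b p.1 - s p.2)

/-- The sum of the `k` largest elements of a finite multiset of reals. -/
noncomputable def topSum (m : Multiset ℝ) (k : ℕ) : ℝ :=
  (((m.sort (· ≤ ·)).reverse).take k).sum

/-- The sum of the `k` smallest elements of a finite multiset of reals. -/
noncomputable def botSum (m : Multiset ℝ) (k : ℕ) : ℝ :=
  ((m.sort (· ≤ ·)).take k).sum

section SortedSum

variable {α : Type*} [AddCommMonoid α] [LinearOrder α] [IsOrderedAddMonoid α]

theorem List.sum_take_cons_le_sum_take {a : α} {l : List α} (ha : ∀ x ∈ l, a ≤ x) {k : ℕ}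
    (hk : k ≤ l.length) : ((a :: l).take k).sum ≤ (l.take k).sum := by
  cases k with
  | zero => simp
  | succ j =>
    rw [List.take_succ_cons, List.sum_cons, List.sum_take_succ l j (by omega), add_comm]
    gcongr
    exact ha _ (List.getElem_mem _)

theorem List.Sublist.sum_take_length_le {l l' : List α} (h : List.Sublist l' l)
    (hl : l.Pairwise (· ≤ ·)) : (l.take l'.length).sum ≤ l'.sum := by
  induction h with
  | slnil => simp
  | cons a h ih =>
    exact (List.sum_take_cons_le_sum_take (List.pairwise_cons.1 hl).1 h.length_le).trans
      (ih hl.of_cons)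
  | cons_cons a _ ih =>
    simpa using add_le_add_right (ih hl.of_cons) a

theorem Multiset.sum_take_card_le_sum {l : List α} (hl : l.Pairwise (· ≤ ·)) {m : Multiset α}
    (hm : m ≤ l) : (l.take (Multiset.card m)).sum ≤ m.sum := by
  induction m using Quotient.inductionOn with
  | h l₀ =>
    obtain ⟨l', hperm, hsub⟩ := Multiset.coe_le.1 hm
    simpa [← hperm.length_eq, ← hperm.sum_eq] using hsub.sum_take_length_le hl

end SortedSum

theorem botSum_le_sum_of_le {m m' : Multiset ℝ} (h : m' ≤ m) :
    botSum m (Multiset.card m') ≤ m'.sum :=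
  Multiset.sum_take_card_le_sum (m.pairwise_sort (· ≤ ·)) (by rwa [Multiset.sort_eq])

theorem sum_le_topSum_of_le {m m' : Multiset ℝ} (h : m' ≤ m) :
    m'.sum ≤ topSum m (Multiset.card m') :=
  -- the reversed ascending sort is an ascending sort in `ℝᵒᵈ`
  Multiset.sum_take_card_le_sum (α := ℝᵒᵈ) (l := (m.sort (· ≤ ·)).reverse)
    (List.pairwise_reverse.2 (m.pairwise_sort (· ≤ ·))) (m := m')
    (show m' ≤ ((m.sort (· ≤ ·)).reverse : Multiset ℝ) by
      rwa [Multiset.coe_reverse, Multiset.sort_eq])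

theorem sum_comp_le_topSum {α β : Type*} [DecidableEq β] {X : Finset α} {T : Finset β}
    {φ : α → β} (hφ : Set.InjOn φ X) (hT : ∀ x ∈ X, φ x ∈ T) (v : β → ℝ) :
    ∑ x ∈ X, v (φ x) ≤ topSum (T.val.map v) #X := by
  rw [← card_image_of_injOn hφ, ← sum_image hφ]
  have h := sum_le_topSum_of_le (Multiset.map_le_map (f := v)
    (val_le_iff.2 (image_subset_iff.2 hT)))
  rwa [Multiset.card_map, ← sum_eq_multiset_sum] at h

theorem botSum_le_sum_comp {α β : Type*} [DecidableEq β] {X : Finset α} {T : Finset β}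
    {φ : α → β} (hφ : Set.InjOn φ X) (hT : ∀ x ∈ X, φ x ∈ T) (v : β → ℝ) :
    botSum (T.val.map v) #X ≤ ∑ x ∈ X, v (φ x) := by
  rw [← card_image_of_injOn hφ, ← sum_image hφ]
  have h := botSum_le_sum_of_le (Multiset.map_le_map (f := v)
    (val_le_iff.2 (image_subset_iff.2 hT)))
  rwa [Multiset.card_map, ← sum_eq_multiset_sum] at h

theorem Finset.one_sub_one_div_card_mul_sum_le_sum_erase {α : Type*} [DecidableEq α]
    {F : Finset α} {w : α → ℝ} {q : α} (hq : q ∈ F) (hmin : ∀ p ∈ F, w q ≤ w p) :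
    (1 - 1 / #F) * ∑ p ∈ F, w p ≤ ∑ p ∈ F.erase q, w p := by
  have hF : (0 : ℝ) < #F := by exact_mod_cast card_pos.2 ⟨q, hq⟩
  have hq_le : #F * w q ≤ ∑ p ∈ F, w p := by
    simpa using card_nsmul_le_sum F w (w q) hmin
  rw [sum_erase_eq_sub hq, sub_mul, one_mul, one_div_mul_eq_div]
  have : w q ≤ (∑ p ∈ F, w p) / #F := by rw [le_div_iff₀ hF]; linarith
  linarith

section Transversal

variable {α γ : Type*} [DecidableEq γ]

structure Finset.IsTransversal (M D : Finset α) (f : α → γ) : Prop where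
  subset : D ⊆ M
  injOn : Set.InjOn f D
  image_eq : D.image f = M.image f

theorem Finset.exists_isTransversal_forall_le (M : Finset α) (f : α → γ) (w : α → ℝ) :
    ∃ D, M.IsTransversal D f ∧ ∀ q ∈ D, ∀ p ∈ M, f p = f q → w q ≤ w p := by
  classical
  have hfiber :
      ∀ c ∈ M.image f, ∃ q ∈ M, f q = c ∧ ∀ p ∈ M, f p = c → w q ≤ w p := by
    intro c hc
    obtain ⟨q, hq, hmin⟩ := (M.filter (f · = c)).exists_min_image w
      (fiber_nonempty_iff_mem_image.2 hc)
    simp only [mem_filter] at hq hmin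
    exact ⟨q, hq.1, hq.2, fun p hp hpc => hmin p ⟨hp, hpc⟩⟩
  choose g hgM hgf hgmin using hfiber
  refine ⟨(M.image f).attach.image fun c => g c.1 c.2, ⟨?_, ?_, ?_⟩, ?_⟩
  · intro q hq
    obtain ⟨⟨c, hc⟩, -, rfl⟩ := mem_image.1 hq
    exact hgM c hc
  · intro q hq q' hq' h
    obtain ⟨⟨c, hc⟩, -, rfl⟩ := mem_image.1 hq
    obtain ⟨⟨c', hc'⟩, -, rfl⟩ := mem_image.1 hq'
    rw [hgf c hc, hgf c' hc'] at h
    subst h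
    rfl
  · ext c
    constructor
    · intro hc
      obtain ⟨_, hq, rfl⟩ := mem_image.1 hc
      obtain ⟨⟨c, hcM⟩, -, rfl⟩ := mem_image.1 hq
      rwa [hgf c hcM]
    · intro hc
      exact mem_image.2 ⟨g c hc, mem_image.2 ⟨⟨c, hc⟩, mem_attach _ _, rfl⟩, hgf c hc⟩
  · intro q hq p hp hpq
    obtain ⟨⟨c, hc⟩, -, rfl⟩ := mem_image.1 hq
    exact hgmin c hc p hp (hpq.trans (hgf c hc))

namespace Finset.IsTransversal

variable [DecidableEq α] {M D : Finset α} {f : α → γ}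

theorem card_filter_sdiff {δ ε : Type*} [DecidableEq δ] [DecidableEq ε]
    (hD : M.IsTransversal D f) {h : γ → δ} {e : γ → ε} {t : δ}
    (he : Set.InjOn e ((M.filter fun p => h (f p) = t).image f)) :
    #((M \ D).filter fun p => h (f p) = t) =
      #(M.filter fun p => h (f p) = t) -
        #((M.filter fun p => h (f p) = t).image fun p => e (f p)) := by
  have hsdiff : (M \ D).filter (fun p => h (f p) = t) =
      M.filter (fun p => h (f p) = t) \ D.filter (fun p => h (f p) = t) := by
    ext p
    simp only [mem_filter, mem_sdiff]
    tauto
  have himage : (D.filter fun p => h (f p) = t).image f =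
      (M.filter fun p => h (f p) = t).image f := by
    rw [← filter_image (p := (h · = t)), hD.image_eq, filter_image]
  rw [hsdiff, card_sdiff_of_subset (filter_subset_filter _ hD.subset),
    ← card_image_of_injOn (hD.injOn.mono (filter_subset _ _)), himage,
    ← card_image_of_injOn he, image_image]
  rfl

theorem mul_sum_le_sum_sdiff (hD : M.IsTransversal D f) {w : α → ℝ}
    (hmin : ∀ q ∈ D, ∀ p ∈ M, f p = f q → w q ≤ w p) (hw : ∀ p ∈ M, 0 ≤ w p)
    {β : ℝ} (hβ : ∀ p ∈ M, β ≤ 1 - 1 / #(M.filter fun p' => f p' = f p)) :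
    β * ∑ p ∈ M, w p ≤ ∑ p ∈ M \ D, w p := by
  rw [← sum_fiberwise_of_maps_to (fun p hp => mem_image_of_mem f hp),
    ← sum_fiberwise_of_maps_to (t := M.image f) (g := f)
      (fun p hp => mem_image_of_mem f (mem_sdiff.1 hp).1), mul_sum]
  refine sum_le_sum fun c hc => ?_
  obtain ⟨q, hqD, rfl⟩ := mem_image.1 (hD.image_eq ▸ hc)
  have hqM := hD.subset hqD
  have hfiber : (M \ D).filter (fun p => f p = f q) = (M.filter fun p => f p = f q).erase q := by
    ext p
    simp only [mem_filter, mem_sdiff, mem_erase]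
    constructor
    · rintro ⟨⟨hp, hpD⟩, hpq⟩
      exact ⟨fun h => hpD (h ▸ hqD), hp, hpq⟩
    · rintro ⟨hne, hp, hpq⟩
      exact ⟨⟨hp, fun hpD => hne (hD.injOn hpD hqD hpq)⟩, hpq⟩
  rw [hfiber]
  calc β * ∑ p ∈ M with f p = f q, w p
      ≤ (1 - 1 / #(M.filter fun p => f p = f q)) * ∑ p ∈ M with f p = f q, w p :=
        mul_le_mul_of_nonneg_right (hβ q hqM) (sum_nonneg fun p hp => hw p (mem_filter.1 hp).1)
    _ ≤ _ := one_sub_one_div_card_mul_sum_le_sum_erase (mem_filter.2 ⟨hqM, rfl⟩)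
        fun p hp => hmin q hqD p (mem_filter.1 hp).1 (mem_filter.1 hp).2

end Finset.IsTransversal

end Transversal

theorem IsMatchingOn.mono {B S : Type*} {E : B → S → Prop} {M N : Finset (B × S)}
    (hM : IsMatchingOn E M) (hNM : N ⊆ M) : IsMatchingOn E N :=
  ⟨fun p hp => hM.1 p (hNM hp), fun p hp q hq => hM.2.1 p (hNM hp) q (hNM hq),
    fun p hp q hq => hM.2.2 p (hNM hp) q (hNM hq)⟩

theorem IsMatchingOn.injOn_fst {B S : Type*} {E : B → S → Prop} {M : Finset (B × S)}
    (hM : IsMatchingOn E M) : Set.InjOn Prod.fst (M : Set (B × S)) :=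
  fun p hp q hq => hM.2.1 p hp q hq

theorem IsMatchingOn.injOn_snd {B S : Type*} {E : B → S → Prop} {M : Finset (B × S)}
    (hM : IsMatchingOn E M) : Set.InjOn Prod.snd (M : Set (B × S)) :=
  fun p hp q hq => hM.2.2 p hp q hq

theorem IsMatchingOn.sub_nonneg_of_forall_le {B S : Type*} [DecidableEq B] [DecidableEq S]
    {E : B → S → Prop} {b : B → ℝ} {s : S → ℝ} {M : Finset (B × S)}
    (hM : IsMatchingOn E M)
    (hmax : ∀ N, IsMatchingOn E N → matchWeight b s N ≤ matchWeight b s M) {p : B × S}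
    (hp : p ∈ M) : 0 ≤ b p.1 - s p.2 := by
  have := hmax _ (hM.mono (erase_subset p M))
  rw [matchWeight, matchWeight, ← sum_erase_add M _ hp] at this
  linarith

section ClassSums

variable {B S ι κ : Type*} [DecidableEq B] [DecidableEq S] [DecidableEq ι] [DecidableEq κ]
  {M D : Finset (B × S)} {cB : B → ι} {cS : S → κ}

theorem sum_sdiff_le_sum_topSum [Fintype B] [Fintype ι]
    (hM : Set.InjOn Prod.fst (M : Set (B × S))) (hD : M.IsTransversal D fun p => (cB p.1, cS p.2))
    (b : B → ℝ) {q d : ι → ℕ} (hq : ∀ t, q t = #(M.filter fun p => cB p.1 = t))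
    (hd : ∀ t, d t = #((M.filter fun p => cB p.1 = t).image fun p => cS p.2)) :
    ∑ p ∈ M \ D, b p.1 ≤ ∑ t ∈ univ.filter (fun t => 0 < q t),
      topSum ((univ.filter fun i => cB i = t).val.map b) (q t - d t) := by
  rw [sum_filter_of_ne fun t _ hne => Nat.pos_of_ne_zero fun h0 => hne (by simp [h0, topSum]),
    ← sum_fiberwise (M \ D) (fun p => cB p.1)]
  refine sum_le_sum fun t _ => ?_
  have hcard : #((M \ D).filter fun p => cB p.1 = t) = q t - d t := by
    rw [hq, hd]
    refine hD.card_filter_sdiff (h := Prod.fst) (e := Prod.snd) ?_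
    intro x hx y hy hxy
    obtain ⟨p, hp, rfl⟩ := mem_image.1 hx
    obtain ⟨p', hp', rfl⟩ := mem_image.1 hy
    exact Prod.ext ((mem_filter.1 hp).2.trans (mem_filter.1 hp').2.symm) hxy
  rw [← hcard]
  refine sum_comp_le_topSum (hM.mono (coe_subset.2 ((filter_subset _ _).trans sdiff_subset)))
    (fun p hp => ?_) b
  exact mem_filter.2 ⟨mem_univ _, (mem_filter.1 hp).2⟩

theorem sum_botSum_le_sum_sdiff [Fintype S] [Fintype κ]
    (hM : Set.InjOn Prod.snd (M : Set (B × S))) (hD : M.IsTransversal D fun p => (cB p.1, cS p.2))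
    (s : S → ℝ) {q d : κ → ℕ} (hq : ∀ t, q t = #(M.filter fun p => cS p.2 = t))
    (hd : ∀ t, d t = #((M.filter fun p => cS p.2 = t).image fun p => cB p.1)) :
    ∑ t ∈ univ.filter (fun t => 0 < q t),
      botSum ((univ.filter fun j => cS j = t).val.map s) (q t - d t) ≤
        ∑ p ∈ M \ D, s p.2 := by
  rw [sum_filter_of_ne fun t _ hne => Nat.pos_of_ne_zero fun h0 => hne (by simp [h0, botSum]),
    ← sum_fiberwise (M \ D) (fun p => cS p.2)]
  refine sum_le_sum fun t _ => ?_
  have hcard : #((M \ D).filter fun p => cS p.2 = t) = q t - d t := by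
    rw [hq, hd]
    refine hD.card_filter_sdiff (h := Prod.snd) (e := Prod.fst) ?_
    intro x hx y hy hxy
    obtain ⟨p, hp, rfl⟩ := mem_image.1 hx
    obtain ⟨p', hp', rfl⟩ := mem_image.1 hy
    exact Prod.ext hxy ((mem_filter.1 hp).2.trans (mem_filter.1 hp').2.symm)
  rw [← hcard]
  refine botSum_le_sum_comp (hM.mono (coe_subset.2 ((filter_subset _ _).trans sdiff_subset)))
    (fun p hp => ?_) s
  exact mem_filter.2 ⟨mem_univ _, (mem_filter.1 hp).2⟩

end ClassSums

theorem csInf_le_one_sub_one_div {ι κ : Type*} (r : ι → κ → ℕ) {t : ι} {t' : κ}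
    (h : 0 < r t t') :
    sInf {x : ℝ | ∃ t : ι, ∃ t' : κ, 0 < r t t' ∧ x = 1 - 1 / (r t t' : ℝ)} ≤
      1 - 1 / (r t t' : ℝ) := by
  refine csInf_le ⟨0, ?_⟩ ⟨t, t', h, rfl⟩
  rintro _ ⟨u, u', hu, rfl⟩
  have : (1 : ℝ) ≤ r u u' := by exact_mod_cast hu
  rw [sub_nonneg]
  exact div_le_one_of_le₀ this (by positivity)

theorem trade_reduction_matching_markets_beta_general
    {B S ι κ : Type*} [Fintype B] [Fintype S] [Fintype ι] [Fintype κ]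
    [DecidableEq ι] [DecidableEq κ]
    (E : B → S → Prop) (b : B → ℝ) (s : S → ℝ)
    (cB : B → ι) (cS : S → κ)
    (M : Finset (B × S))
    (hM : IsMatchingOn E M)
    (hMmax : ∀ N, IsMatchingOn E N → matchWeight b s N ≤ matchWeight b s M)
    (qB : ι → ℕ) (hqB : ∀ t, qB t = (M.filter fun p => cB p.1 = t).card)
    (qS : κ → ℕ) (hqS : ∀ t, qS t = (M.filter fun p => cS p.2 = t).card)
    (dB : ι → ℕ)
    (hdB : ∀ t, dB t = ((M.filter fun p => cB p.1 = t).image fun p => cS p.2).card)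
    (dS : κ → ℕ)
    (hdS : ∀ t, dS t = ((M.filter fun p => cS p.2 = t).image fun p => cB p.1).card)
    (r : ι → κ → ℕ)
    (hr : ∀ t t', r t t' = (M.filter fun p => cB p.1 = t ∧ cS p.2 = t').card) :
    (∑ t ∈ univ.filter fun t => 0 < qB t,
        topSum ((univ.filter fun i => cB i = t).val.map b) (qB t - dB t)) -
      (∑ t ∈ univ.filter fun t => 0 < qS t,
        botSum ((univ.filter fun j => cS j = t).val.map s) (qS t - dS t)) ≥
    (sInf {x : ℝ | ∃ t : ι, ∃ t' : κ, 0 < r t t' ∧ x = 1 - 1 / (r t t' : ℝ)}) *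
      matchWeight b s M := by
  classical
  obtain ⟨D, hD, hmin⟩ :=
    M.exists_isTransversal_forall_le (fun p => (cB p.1, cS p.2)) fun p => b p.1 - s p.2
  have hkept : sInf {x : ℝ | ∃ t : ι, ∃ t' : κ, 0 < r t t' ∧ x = 1 - 1 / (r t t' : ℝ)} *
      matchWeight b s M ≤ ∑ p ∈ M \ D, (b p.1 - s p.2) := by
    refine hD.mul_sum_le_sum_sdiff hmin (fun p hp => hM.sub_nonneg_of_forall_le hMmax hp)
      fun p hp => ?_
    have hcard : #(M.filter fun p' => (cB p'.1, cS p'.2) = (cB p.1, cS p.2)) =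
        r (cB p.1) (cS p.2) := by
      simp only [Prod.mk.injEq, hr]
    rw [hcard]
    exact csInf_le_one_sub_one_div r (hcard ▸ card_pos.2 ⟨p, mem_filter.2 ⟨hp, rfl⟩⟩)
  have hbuyers := sum_sdiff_le_sum_topSum hM.injOn_fst hD b hqB hdB
  have hsellers := sum_botSum_le_sum_sdiff hM.injOn_snd hD s hqS hdS
  rw [sum_sub_distrib] at hkept
  linarith

/-- **Second ex-post efficiency guarantee of the Trade Reduction mechanism for matching
markets.** With the same setup as the `α`-guarantee, the Trade Reduction gains from trade is at
least `β · OPT`, where `β = min { 1 - 1/(r t t') : t, t' classes with r t t' > 0 }` and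
`r t t'` is the number of edges of the first-best matching `M` joining a class-`t` buyer and a
class-`t'` seller. -/
theorem trade_reduction_matching_markets_beta
    {B S ι κ : Type*} [Fintype B] [Fintype S] [Fintype ι] [Fintype κ]
    [DecidableEq B] [DecidableEq S] [DecidableEq ι] [DecidableEq κ]
    (E : B → S → Prop) (b : B → ℝ) (s : S → ℝ)
    (hbpos : ∀ i, 0 < b i) (hspos : ∀ j, 0 < s j)
    (cB : B → ι) (cS : S → κ)
    (hcB : ∀ i i', cB i = cB i' ↔ ∀ j, E i j ↔ E i' j)
    (hcS : ∀ j j', cS j = cS j' ↔ ∀ i, E i j ↔ E i j')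
    (M : Finset (B × S))
    (hM : IsMatchingOn E M) (hMne : M.Nonempty)
    (hMmax : ∀ N, IsMatchingOn E N → matchWeight b s N ≤ matchWeight b s M)
    (qB : ι → ℕ) (hqB : ∀ t, qB t = (M.filter fun p => cB p.1 = t).card)
    (qS : κ → ℕ) (hqS : ∀ t, qS t = (M.filter fun p => cS p.2 = t).card)
    (dB : ι → ℕ)
    (hdB : ∀ t, dB t = ((M.filter fun p => cB p.1 = t).image fun p => cS p.2).card)
    (dS : κ → ℕ)
    (hdS : ∀ t, dS t = ((M.filter fun p => cS p.2 = t).image fun p => cB p.1).card)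
    (r : ι → κ → ℕ)
    (hr : ∀ t t', r t t' = (M.filter fun p => cB p.1 = t ∧ cS p.2 = t').card) :
    (∑ t ∈ univ.filter fun t => 0 < qB t,
        topSum ((univ.filter fun i => cB i = t).val.map b) (qB t - dB t)) -
      (∑ t ∈ univ.filter fun t => 0 < qS t,
        botSum ((univ.filter fun j => cS j = t).val.map s) (qS t - dS t)) ≥
    (sInf {x : ℝ | ∃ t : ι, ∃ t' : κ, 0 < r t t' ∧ x = 1 - 1 / (r t t' : ℝ)}) *
      matchWeight b s M :=
  trade_reduction_matching_markets_beta_general E b s cB cS M hM hMmax qB hqB qS hqS dB hdB dS hdS r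
    hr
end

section
/- Odd maximal alternating paths: in the setting of the previous lemma (G = (B,S,E) bipartite; node weights W(i) = b_i, W(j) = −s_j and W₁(i) = φ_i with φ_i ≤ b_i, W₁(j) = −s_j; M the unique maximum node-based-weight matching w.r.t. W; M₁ the unique maximum node-based-weight matching w.r.t. W₁; and for every vertex v the maximum-weight matching w.r.t. W among matchings leaving v uncovered is unique), let A = (i₁, j₁, i₂, j₂, …, i_L, j_L) with L ≥ 2 be a maximal alternating path of M ∪ M₁ with an odd number of edges, where each i_l is a buyer, each j_l is a seller, (i_l, j_l) ∈ M for l = 1, …, L, and (j_l, i_{l+1}) ∈ M₁ for l = 1, …, L−1. Then: (1) if b_{i_L} > b_{i_1}, then i_L is covered by the maximum-weight (w.r.t. W) matching among matchings leaving j_L uncovered; and (2) if b_{i_L} ≤ b_{i_1}, then Σ_{l=1}^{L−1}(b_{i_l} − s_{j_l}) ≥ Σ_{l=1}^{L−1}(b_{i_{l+1}} − s_{j_l}). -/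
/-- A matching of the bipartite graph with vertex sides `B`, `S` and edge relation `E`:
a finite set of edges (pairs) that are pairwise vertex-disjoint. -/
def IsBipMatching {B S : Type*} (E : B → S → Prop) (M : Finset (B × S)) : Prop :=
  (∀ p ∈ M, E p.1 p.2) ∧
  (∀ p ∈ M, ∀ q ∈ M, p.1 = q.1 → p = q) ∧
  (∀ p ∈ M, ∀ q ∈ M, p.2 = q.2 → p = q)

/-- The node-based weight of a matching for a node weight function `W` on `B ⊕ S`:
`∑_{(i,j) ∈ M} (W i + W j)`, i.e. the sum of `W` over all covered vertices. -/
noncomputable def bipNodeWeight {B S : Type*} (W : B ⊕ S → ℝ) (M : Finset (B × S)) : ℝ :=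
  ∑ p ∈ M, (W (Sum.inl p.1) + W (Sum.inr p.2))

/-!
Write the path as `i₀ j₀ i₁ j₁ … i_K j_K`, with `(i_l, j_l) ∈ M` and `(i_{l+1}, j_l) ∈ M₁`.
For (1), suppose `i_K` is uncovered by the best matching `N` avoiding `j_K`. Adding the edge
`(i_K, j_K)` to `N` gives a matching, so `w(N) + b(i_K) - s(j_K) ≤ w(M)`. Swapping `M` along the
path gives a matching avoiding `j_K` that loses exactly the end vertices `i₀` and `j_K`, so
`w(M) - b(i₀) + s(j_K) ≤ w(N)`. Together, `b(i_K) ≤ b(i₀)`. Part (2) is a telescoping sum.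
-/

open Finset

section Matching

variable {B S : Type*} {E : B → S → Prop}

namespace IsBipMatching

theorem subset {M N : Finset (B × S)} (hM : IsBipMatching E M) (hNM : N ⊆ M) :
    IsBipMatching E N :=
  ⟨fun p hp => hM.1 p (hNM hp), fun p hp q hq => hM.2.1 p (hNM hp) q (hNM hq),
    fun p hp q hq => hM.2.2 p (hNM hp) q (hNM hq)⟩

theorem union [DecidableEq B] [DecidableEq S] {N₁ N₂ : Finset (B × S)}
    (h₁ : IsBipMatching E N₁) (h₂ : IsBipMatching E N₂)
    (hB : ∀ p ∈ N₁, ∀ q ∈ N₂, p.1 ≠ q.1) (hS : ∀ p ∈ N₁, ∀ q ∈ N₂, p.2 ≠ q.2) :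
    IsBipMatching E (N₁ ∪ N₂) := by
  refine ⟨fun p hp => ?_, fun p hp q hq hpq => ?_, fun p hp q hq hpq => ?_⟩
  · rcases mem_union.1 hp with hp | hp
    exacts [h₁.1 p hp, h₂.1 p hp]
  · rcases mem_union.1 hp with hp | hp <;> rcases mem_union.1 hq with hq | hq
    · exact h₁.2.1 p hp q hq hpq
    · exact absurd hpq (hB p hp q hq)
    · exact absurd hpq.symm (hB q hq p hp)
    · exact h₂.2.1 p hp q hq hpq
  · rcases mem_union.1 hp with hp | hp <;> rcases mem_union.1 hq with hq | hq
    · exact h₁.2.2 p hp q hq hpq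
    · exact absurd hpq (hS p hp q hq)
    · exact absurd hpq.symm (hS q hq p hp)
    · exact h₂.2.2 p hp q hq hpq

theorem insert [DecidableEq B] [DecidableEq S] {N : Finset (B × S)} (hN : IsBipMatching E N)
    {i : B} {j : S} (hij : E i j) (hi : ∀ p ∈ N, p.1 ≠ i) (hj : ∀ p ∈ N, p.2 ≠ j) :
    IsBipMatching E (insert (i, j) N) := by
  have hsingle : IsBipMatching E {(i, j)} :=
    ⟨by simpa using hij, by simp, by simp⟩
  rw [Finset.insert_eq]
  refine hsingle.union hN (fun p hp q hq => ?_) (fun p hp q hq => ?_) <;>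
    rw [mem_singleton.1 hp]
  exacts [(hi q hq).symm, (hj q hq).symm]

end IsBipMatching

theorem bipNodeWeight_insert [DecidableEq B] [DecidableEq S] (W : B ⊕ S → ℝ)
    {N : Finset (B × S)} {e : B × S} (he : e ∉ N) :
    bipNodeWeight W (insert e N) = W (.inl e.1) + W (.inr e.2) + bipNodeWeight W N :=
  sum_insert he

section Path

variable [DecidableEq B] [DecidableEq S] (iv : ℕ → B) (jv : ℕ → S)

def pathEdges (n : ℕ) : Finset (B × S) := (range n).image fun l => (iv l, jv l)

def shiftedPathEdges (n : ℕ) : Finset (B × S) := (range n).image fun l => (iv (l + 1), jv l)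

/-- The symmetric difference of `M` with the alternating path `i₀ j₀ i₁ … i_K j_K`. -/
def pathSwap (M : Finset (B × S)) (K : ℕ) : Finset (B × S) :=
  (M \ pathEdges iv jv (K + 1)) ∪ shiftedPathEdges iv jv K

variable {iv jv}

theorem mem_pathEdges {n : ℕ} {p : B × S} :
    p ∈ pathEdges iv jv n ↔ ∃ l < n, (iv l, jv l) = p := by
  simp [pathEdges]

theorem mem_shiftedPathEdges {n : ℕ} {p : B × S} :
    p ∈ shiftedPathEdges iv jv n ↔ ∃ l < n, (iv (l + 1), jv l) = p := by
  simp [shiftedPathEdges]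

theorem bipNodeWeight_pathEdges_sub_shiftedPathEdges (W : B ⊕ S → ℝ) {K : ℕ}
    (hjv : Set.InjOn jv (Set.Iio (K + 1))) :
    bipNodeWeight W (pathEdges iv jv (K + 1)) - bipNodeWeight W (shiftedPathEdges iv jv K) =
      W (.inl (iv 0)) + W (.inr (jv K)) := by
  have hP : Set.InjOn (fun l => (iv l, jv l)) (range (K + 1)) := fun l hl l' hl' h =>
    hjv (mem_range.1 hl) (mem_range.1 hl') (congrArg Prod.snd h)
  have hQ : Set.InjOn (fun l => (iv (l + 1), jv l)) (range K) := fun l hl l' hl' h =>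
    hjv (show l < K + 1 by have := mem_range.1 hl; omega)
      (show l' < K + 1 by have := mem_range.1 hl'; omega) (congrArg Prod.snd h)
  rw [bipNodeWeight, bipNodeWeight, pathEdges, shiftedPathEdges, sum_image hP, sum_image hQ]
  simp only [sum_add_distrib]
  rw [sum_range_succ' (fun l => W (.inl (iv l))), sum_range_succ (fun l => W (.inr (jv l)))]
  ring

theorem IsBipMatching.shiftedPathEdges {n : ℕ} (hE : ∀ l < n, E (iv (l + 1)) (jv l))
    (hiv : Set.InjOn iv (Set.Iio (n + 1))) (hjv : Set.InjOn jv (Set.Iio n)) :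
    IsBipMatching E (shiftedPathEdges iv jv n) := by
  refine ⟨fun p hp => ?_, fun p hp q hq hpq => ?_, fun p hp q hq hpq => ?_⟩ <;>
    obtain ⟨l, hl, rfl⟩ := mem_shiftedPathEdges.1 hp
  · exact hE l hl
  all_goals obtain ⟨l', hl', rfl⟩ := mem_shiftedPathEdges.1 hq
  · have : l + 1 = l' + 1 := hiv (show l + 1 < n + 1 by omega) (show l' + 1 < n + 1 by omega) hpq
    rw [Nat.succ_injective this]
  · rw [hjv hl hl' hpq]

section Swap

variable {M : Finset (B × S)} {K : ℕ} (hM : IsBipMatching E M)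
  (hpath : ∀ l < K + 1, (iv l, jv l) ∈ M)
include hM hpath

theorem mem_pathEdges_of_fst_eq {p : B × S} (hp : p ∈ M) {l : ℕ} (hl : l < K + 1)
    (h : p.1 = iv l) : p ∈ pathEdges iv jv (K + 1) := by
  rw [hM.2.1 p hp _ (hpath l hl) h]
  exact mem_pathEdges.2 ⟨l, hl, rfl⟩

theorem mem_pathEdges_of_snd_eq {p : B × S} (hp : p ∈ M) {l : ℕ} (hl : l < K + 1)
    (h : p.2 = jv l) : p ∈ pathEdges iv jv (K + 1) := by
  rw [hM.2.2 p hp _ (hpath l hl) h]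
  exact mem_pathEdges.2 ⟨l, hl, rfl⟩

theorem IsBipMatching.pathSwap (hE : ∀ l < K, E (iv (l + 1)) (jv l))
    (hiv : Set.InjOn iv (Set.Iio (K + 1))) (hjv : Set.InjOn jv (Set.Iio (K + 1))) :
    IsBipMatching E (pathSwap iv jv M K) := by
  refine (hM.subset sdiff_subset).union
    (.shiftedPathEdges hE hiv (hjv.mono (Set.Iio_subset_Iio K.le_succ)))
    (fun p hp q hq hpq => ?_) (fun p hp q hq hpq => ?_) <;>
    obtain ⟨hpM, hpP⟩ := mem_sdiff.1 hp <;> obtain ⟨l, hl, rfl⟩ := mem_shiftedPathEdges.1 hq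
  · exact hpP (mem_pathEdges_of_fst_eq hM hpath hpM (by omega) hpq)
  · exact hpP (mem_pathEdges_of_snd_eq hM hpath hpM (by omega) hpq)

theorem snd_ne_last_of_mem_pathSwap (hjv : Set.InjOn jv (Set.Iio (K + 1))) :
    ∀ p ∈ pathSwap iv jv M K, p.2 ≠ jv K := by
  intro p hp hpK
  rcases mem_union.1 hp with hp | hp
  · obtain ⟨hpM, hpP⟩ := mem_sdiff.1 hp
    exact hpP (mem_pathEdges_of_snd_eq hM hpath hpM K.lt_succ_self hpK)
  · obtain ⟨l, hl, rfl⟩ := mem_shiftedPathEdges.1 hp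
    have : l = K := hjv (show l < K + 1 by omega) K.lt_succ_self hpK
    omega

theorem bipNodeWeight_pathSwap (W : B ⊕ S → ℝ) (hjv : Set.InjOn jv (Set.Iio (K + 1))) :
    bipNodeWeight W (pathSwap iv jv M K) =
      bipNodeWeight W M - (W (.inl (iv 0)) + W (.inr (jv K))) := by
  have hPM : pathEdges iv jv (K + 1) ⊆ M := fun p hp => by
    obtain ⟨l, hl, rfl⟩ := mem_pathEdges.1 hp
    exact hpath l hl
  have hdisj : Disjoint (M \ pathEdges iv jv (K + 1)) (shiftedPathEdges iv jv K) := by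
    refine disjoint_right.2 fun q hq hqM => (mem_sdiff.1 hqM).2 ?_
    obtain ⟨l, hl, rfl⟩ := mem_shiftedPathEdges.1 hq
    exact mem_pathEdges_of_snd_eq hM hpath (mem_sdiff.1 hqM).1 (by omega) rfl
  rw [← bipNodeWeight_pathEdges_sub_shiftedPathEdges W hjv, pathSwap, bipNodeWeight,
    sum_union hdisj, sum_sdiff_eq_sub hPM]
  simp only [bipNodeWeight]
  ring

end Swap

end Path

end Matching

theorem odd_maximal_alternating_path_general
    {B S : Type*}
    (E : B → S → Prop) (b : B → ℝ) (s : S → ℝ)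
    (M M₁ : Finset (B × S))
    (hM : IsBipMatching E M) (hM₁ : IsBipMatching E M₁)
    (hMmax : ∀ N, IsBipMatching E N →
      bipNodeWeight (Sum.elim b fun j => -s j) N ≤ bipNodeWeight (Sum.elim b fun j => -s j) M)
    (MminusS : S → Finset (B × S))
    (hMmS : ∀ j, IsBipMatching E (MminusS j))
    (hMmSfree : ∀ j, ∀ p ∈ MminusS j, p.2 ≠ j)
    (hMmSmax : ∀ j, ∀ N, IsBipMatching E N → (∀ p ∈ N, p.2 ≠ j) →
      bipNodeWeight (Sum.elim b fun j' => -s j') N ≤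
        bipNodeWeight (Sum.elim b fun j' => -s j') (MminusS j))
    (L : ℕ) (iv : ℕ → B) (jv : ℕ → S)
    (hivinj : ∀ l l', l < L → l' < L → iv l = iv l' → l = l')
    (hjvinj : ∀ l l', l < L → l' < L → jv l = jv l' → l = l')
    (hMedge : ∀ l < L, (iv l, jv l) ∈ M)
    (hM₁edge : ∀ l, l + 1 < L → (iv (l + 1), jv l) ∈ M₁) :
    (b (iv 0) < b (iv (L - 1)) → ∃ p ∈ MminusS (jv (L - 1)), p.1 = iv (L - 1)) ∧
    (b (iv (L - 1)) ≤ b (iv 0) →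
      ∑ l ∈ Finset.range (L - 1), (b (iv l) - s (jv l)) ≥
        ∑ l ∈ Finset.range (L - 1), (b (iv (l + 1)) - s (jv l))) := by
  classical
  refine ⟨fun hb => ?_, fun hb => ?_⟩
  · obtain ⟨K, rfl⟩ : ∃ K, L = K + 1 :=
      Nat.exists_eq_add_one.2 (Nat.pos_of_ne_zero (by rintro rfl; exact hb.false))
    rw [Nat.add_sub_cancel] at hb ⊢
    by_contra! hfree
    have hiv : Set.InjOn iv (Set.Iio (K + 1)) := fun l hl l' hl' => hivinj l l' hl hl'
    have hjv : Set.InjOn jv (Set.Iio (K + 1)) := fun l hl l' hl' => hjvinj l l' hl hl'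
    have hlast := hMedge K K.lt_succ_self
    have hadd := hMmax _ ((hMmS (jv K)).insert (hM.1 _ hlast) hfree (hMmSfree (jv K)))
    have hswap := hMmSmax (jv K) _
      (hM.pathSwap hMedge (fun l hl => hM₁.1 _ (hM₁edge l (by omega))) hiv hjv)
      (snd_ne_last_of_mem_pathSwap hM hMedge hjv)
    rw [bipNodeWeight_insert _ fun h => hMmSfree (jv K) _ h rfl] at hadd
    rw [bipNodeWeight_pathSwap hM hMedge _ hjv] at hswap
    simp only [Sum.elim_inl, Sum.elim_inr] at hadd hswap
    linarith
  · rw [ge_iff_le, ← sub_nonneg, ← sum_sub_distrib]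
    simpa only [sub_sub_sub_cancel_right, sum_range_sub' (fun l => b (iv l)), sub_nonneg]

/-- **Odd maximal alternating paths.** With node weights `W i = b i`, `W j = -s j` and
`W₁ i = φ i` (where `φ i ≤ b i`), `W₁ j = -s j`, let `M` be the unique maximum
node-based-weight matching w.r.t. `W`, `M₁` the unique maximum node-based-weight matching
w.r.t. `W₁`, and for every buyer `i` (resp. seller `j`) let `MminusB i` (resp. `MminusS j`) be
the unique maximum-weight (w.r.t. `W`) matching among matchings leaving that vertex uncovered.
Let `A = (i₁, j₁, i₂, j₂, ..., i_L, j_L)` (here 0-indexed: `iv 0, jv 0, ..., iv (L-1),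
jv (L-1)`) with `L ≥ 2` be a maximal alternating path of `M ∪ M₁` with an odd number of edges,
where `(i_l, j_l) ∈ M` and `(i_{l+1}, j_l) ∈ M₁`. Then: (1) if `b i_L > b i₁` then `i_L` is
covered by `MminusS j_L`; and (2) if `b i_L ≤ b i₁` then
`∑_{l=1}^{L-1} (b i_l - s j_l) ≥ ∑_{l=1}^{L-1} (b i_{l+1} - s j_l)`. -/
theorem odd_maximal_alternating_path
    {B S : Type*} [Fintype B] [Fintype S] [DecidableEq B] [DecidableEq S]
    (E : B → S → Prop) (b : B → ℝ) (s : S → ℝ) (φ : B → ℝ)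
    (hφ : ∀ i, φ i ≤ b i)
    (M M₁ : Finset (B × S))
    (hM : IsBipMatching E M) (hM₁ : IsBipMatching E M₁)
    (hMmax : ∀ N, IsBipMatching E N →
      bipNodeWeight (Sum.elim b fun j => -s j) N ≤ bipNodeWeight (Sum.elim b fun j => -s j) M)
    (hMuniq : ∀ N, IsBipMatching E N →
      bipNodeWeight (Sum.elim b fun j => -s j) N = bipNodeWeight (Sum.elim b fun j => -s j) M →
      N = M)
    (hM₁max : ∀ N, IsBipMatching E N →
      bipNodeWeight (Sum.elim φ fun j => -s j) N ≤ bipNodeWeight (Sum.elim φ fun j => -s j) M₁)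
    (hM₁uniq : ∀ N, IsBipMatching E N →
      bipNodeWeight (Sum.elim φ fun j => -s j) N = bipNodeWeight (Sum.elim φ fun j => -s j) M₁ →
      N = M₁)
    (MminusB : B → Finset (B × S))
    (hMmB : ∀ i, IsBipMatching E (MminusB i))
    (hMmBfree : ∀ i, ∀ p ∈ MminusB i, p.1 ≠ i)
    (hMmBmax : ∀ i, ∀ N, IsBipMatching E N → (∀ p ∈ N, p.1 ≠ i) →
      bipNodeWeight (Sum.elim b fun j => -s j) N ≤
        bipNodeWeight (Sum.elim b fun j => -s j) (MminusB i))
    (hMmBuniq : ∀ i, ∀ N, IsBipMatching E N → (∀ p ∈ N, p.1 ≠ i) →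
      bipNodeWeight (Sum.elim b fun j => -s j) N =
        bipNodeWeight (Sum.elim b fun j => -s j) (MminusB i) → N = MminusB i)
    (MminusS : S → Finset (B × S))
    (hMmS : ∀ j, IsBipMatching E (MminusS j))
    (hMmSfree : ∀ j, ∀ p ∈ MminusS j, p.2 ≠ j)
    (hMmSmax : ∀ j, ∀ N, IsBipMatching E N → (∀ p ∈ N, p.2 ≠ j) →
      bipNodeWeight (Sum.elim b fun j' => -s j') N ≤
        bipNodeWeight (Sum.elim b fun j' => -s j') (MminusS j))
    (hMmSuniq : ∀ j, ∀ N, IsBipMatching E N → (∀ p ∈ N, p.2 ≠ j) →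
      bipNodeWeight (Sum.elim b fun j' => -s j') N =
        bipNodeWeight (Sum.elim b fun j' => -s j') (MminusS j) → N = MminusS j)
    (L : ℕ) (hL : 2 ≤ L) (iv : ℕ → B) (jv : ℕ → S)
    (hivinj : ∀ l l', l < L → l' < L → iv l = iv l' → l = l')
    (hjvinj : ∀ l l', l < L → l' < L → jv l = jv l' → l = l')
    (hMedge : ∀ l < L, (iv l, jv l) ∈ M)
    (hM₁edge : ∀ l, l + 1 < L → (iv (l + 1), jv l) ∈ M₁)
    (hmaxfirst : ∀ p, (p ∈ M ∨ p ∈ M₁) → p.1 = iv 0 → p.2 = jv 0)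
    (hmaxlast : ∀ p, (p ∈ M ∨ p ∈ M₁) → p.2 = jv (L - 1) → p.1 = iv (L - 1)) :
    (b (iv 0) < b (iv (L - 1)) → ∃ p ∈ MminusS (jv (L - 1)), p.1 = iv (L - 1)) ∧
    (b (iv (L - 1)) ≤ b (iv 0) →
      ∑ l ∈ Finset.range (L - 1), (b (iv l) - s (jv l)) ≥
        ∑ l ∈ Finset.range (L - 1), (b (iv (l + 1)) - s (jv l))) :=
  odd_maximal_alternating_path_general E b s M M₁ hM hM₁ hMmax MminusS hMmS hMmSfree hMmSmax L iv jv
    hivinj hjvinj hMedge hM₁edge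
end
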